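/- arXiv:math-ph/0701006 — 2 statements merged into one kernel-verified Lean document; each statement's English description precedes it below -/
import Mathlib

section
/- Let P be a 2-dimensional affine plane in ℝ³ with its induced surface (2-dimensional Hausdorff) measure dS. Let 0 < a < 2, 0 < b < 2, and a + b > 2. Then there exists a constant C, depending only on a and b (independent of ξ and P), such that for every nonzero ξ ∈ ℝ³, ∫_P |ξ − η|^{−a} |η|^{−b} dS(η) ≤ C |ξ|^{−(a+b−2)}. -/
/-!
Parametrize `P` isometrically by `ℝ²`; this turns `μH[2]` on `P` into a Haar measure on `ℝ²`.
If `c` and `c'` are the parameters of the feet of the perpendiculars from `0` and `ξ`, then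
`|w - c| ≤ |η|` and `|w - c'| ≤ |ξ - η|` at `η = e w`. With `R = |ξ| / 2` the kernel is at
most `R^{-a} |w - c|^{-b}` where `|η| < R`, at most `R^{-b} |w - c'|^{-a}` where `|ξ - η| < R`,
and a multiple of `(R + |w - c|)^{-(a+b)}` elsewhere, since there `|ξ - η| ≥ |η| / 3` and
`|η| ≥ (R + |w - c|) / 2`. Rescaling by `R`, the three integrals are `R^{2-a-b}` times
`∫_{|x|<1} |x|^{-b}`, `∫_{|x|<1} |x|^{-a}` and `∫ (1 + |x|)^{-(a+b)}`, which are finite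
because `a, b < 2 < a + b`.
-/

open MeasureTheory Metric Set Module
open scoped ENNReal

section HaarScaling

variable {E : Type*} [NormedAddCommGroup E] [NormedSpace ℝ E] [FiniteDimensional ℝ E]
  [MeasurableSpace E] [BorelSpace E] (μ : Measure E) [μ.IsAddHaarMeasure]

theorem lintegral_comp_inv_smul_of_pos {R : ℝ} (hR : 0 < R) (g : E → ℝ≥0∞) :
    ∫⁻ x, g (R⁻¹ • x) ∂μ = ENNReal.ofReal (R ^ finrank ℝ E) * ∫⁻ x, g x ∂μ := by
  have hR' : R⁻¹ ≠ 0 := inv_ne_zero hR.ne'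
  calc ∫⁻ x, g (R⁻¹ • x) ∂μ = ∫⁻ x, g x ∂(Measure.map (R⁻¹ • ·) μ) :=
        (lintegral_map_equiv g (Homeomorph.smulOfNeZero R⁻¹ hR').toMeasurableEquiv).symm
    _ = ENNReal.ofReal (R ^ finrank ℝ E) * ∫⁻ x, g x ∂μ := by
        rw [Measure.map_addHaar_smul μ hR', lintegral_smul_measure, inv_pow, inv_inv,
          abs_of_pos (by positivity), smul_eq_mul]

theorem lintegral_ball_norm_sub_rpow_neg (c : E) {R : ℝ} (hR : 0 < R) (t : ℝ) :
    ∫⁻ w in ball c R, ENNReal.ofReal (‖w - c‖ ^ (-t)) ∂μ =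
      ENNReal.ofReal (R ^ (finrank ℝ E - t)) *
        ∫⁻ x in ball 0 1, ENNReal.ofReal (‖x‖ ^ (-t)) ∂μ := by
  have hscale : ∀ w, (ball c R).indicator (fun w => ENNReal.ofReal (‖w - c‖ ^ (-t))) w =
      ENNReal.ofReal (R ^ (-t)) *
        (ball 0 1).indicator (fun x => ENNReal.ofReal (‖x‖ ^ (-t))) (R⁻¹ • (w - c)) := by
    intro w
    have hnorm : ‖R⁻¹ • (w - c)‖ = R⁻¹ * ‖w - c‖ := by
      rw [norm_smul, Real.norm_of_nonneg (inv_nonneg.2 hR.le)]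
    by_cases hw : ‖w - c‖ < R
    · rw [indicator_of_mem (by rwa [mem_ball, dist_eq_norm]),
        indicator_of_mem (by rwa [mem_ball_zero_iff, hnorm, inv_mul_lt_one₀ hR]),
        ← ENNReal.ofReal_mul (by positivity), hnorm,
        Real.mul_rpow (inv_nonneg.2 hR.le) (norm_nonneg _), Real.inv_rpow hR.le,
        mul_inv_cancel_left₀ (Real.rpow_pos_of_pos hR _).ne']
    · rw [indicator_of_notMem (by rwa [mem_ball, dist_eq_norm]),
        indicator_of_notMem (by rwa [mem_ball_zero_iff, hnorm, inv_mul_lt_one₀ hR]), mul_zero]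
  rw [← lintegral_indicator measurableSet_ball, ← lintegral_indicator measurableSet_ball]
  simp_rw [hscale]
  rw [lintegral_const_mul' _ _ ENNReal.ofReal_ne_top,
    lintegral_sub_right_eq_self
      (fun x => (ball 0 1).indicator (fun x => ENNReal.ofReal (‖x‖ ^ (-t))) (R⁻¹ • x)) c,
    lintegral_comp_inv_smul_of_pos μ hR, ← mul_assoc, ← ENNReal.ofReal_mul (by positivity),
    ← Real.rpow_natCast, ← Real.rpow_add hR, neg_add_eq_sub]

theorem lintegral_add_norm_sub_rpow_neg (c : E) {R : ℝ} (hR : 0 < R) (s : ℝ) :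
    ∫⁻ w, ENNReal.ofReal ((R + ‖w - c‖) ^ (-s)) ∂μ =
      ENNReal.ofReal (R ^ (finrank ℝ E - s)) * ∫⁻ x, ENNReal.ofReal ((1 + ‖x‖) ^ (-s)) ∂μ := by
  have hscale : ∀ w, ENNReal.ofReal ((R + ‖w - c‖) ^ (-s)) =
      ENNReal.ofReal (R ^ (-s)) * ENNReal.ofReal ((1 + ‖R⁻¹ • (w - c)‖) ^ (-s)) := by
    intro w
    rw [← ENNReal.ofReal_mul (by positivity), ← Real.mul_rpow hR.le (by positivity), norm_smul,
      Real.norm_of_nonneg (inv_nonneg.2 hR.le), mul_add, mul_one, mul_inv_cancel_left₀ hR.ne']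
  simp_rw [hscale]
  rw [lintegral_const_mul' _ _ ENNReal.ofReal_ne_top,
    lintegral_sub_right_eq_self (fun x => ENNReal.ofReal ((1 + ‖R⁻¹ • x‖) ^ (-s))) c,
    lintegral_comp_inv_smul_of_pos μ hR (fun x => ENNReal.ofReal ((1 + ‖x‖) ^ (-s))), ← mul_assoc,
    ← ENNReal.ofReal_mul (by positivity), ← Real.rpow_natCast, ← Real.rpow_add hR, neg_add_eq_sub]

theorem lintegral_ball_norm_rpow_neg_lt_top [Nontrivial E] {t : ℝ} (ht : t < finrank ℝ E) :
    ∫⁻ x in ball (0 : E) 1, ENNReal.ofReal (‖x‖ ^ (-t)) ∂μ < ∞ := by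
  refine IntegrableOn.setLIntegral_lt_top ?_
  rw [integrableOn_fun_norm_addHaar μ (f := fun y => y ^ (-t))]
  have hint : IntegrableOn (fun y : ℝ => y ^ ((finrank ℝ E : ℝ) - 1 - t)) (Ioo 0 1) :=
    (intervalIntegral.intervalIntegrable_rpow' (by linarith)).1.mono_set Ioo_subset_Ioc_self
  refine hint.congr_fun (fun y hy => ?_) measurableSet_Ioo
  rw [smul_eq_mul, ← Real.rpow_natCast, ← Real.rpow_add hy.1, Nat.cast_sub finrank_pos,
    Nat.cast_one, sub_eq_add_neg _ t]

end HaarScaling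

theorem rpow_neg_mul_rpow_neg_le {a b k l r x y : ℝ} (ha : 0 ≤ a) (hb : 0 ≤ b) (hk : 0 < k)
    (hl : 0 < l) (hr : 0 < r) (hx : r / k ≤ x) (hy : r / l ≤ y) :
    x ^ (-a) * y ^ (-b) ≤ k ^ a * l ^ b * r ^ (-(a + b)) :=
  calc x ^ (-a) * y ^ (-b) ≤ (r / k) ^ (-a) * (r / l) ^ (-b) := by
        have hy0 : 0 < y := lt_of_lt_of_le (by positivity) hy
        refine mul_le_mul ?_ ?_ (by positivity) (by positivity)
        · exact Real.rpow_le_rpow_of_nonpos (by positivity) hx (by linarith)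
        · exact Real.rpow_le_rpow_of_nonpos (by positivity) hy (by linarith)
    _ = k ^ a * l ^ b * r ^ (-(a + b)) := by
        rw [Real.div_rpow hr.le hk.le, Real.div_rpow hr.le hl.le, Real.rpow_neg hk.le,
          Real.rpow_neg hl.le, neg_add, Real.rpow_add hr]
        field_simp

theorem ofReal_norm_sub_rpow_mul_norm_rpow_le {E F : Type*} [NormedAddCommGroup E]
    [NormedAddCommGroup F] {a b R : ℝ} (ha : 0 ≤ a) (hb : 0 ≤ b) (hR : 0 < R) {ξ η : E}
    (hξ : ‖ξ‖ = 2 * R) {w c c' : F} (hc : w ≠ c) (hc' : w ≠ c') (hη : ‖w - c‖ ≤ ‖η‖)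
    (hξη : ‖w - c'‖ ≤ ‖ξ - η‖) :
    ENNReal.ofReal (‖ξ - η‖ ^ (-a) * ‖η‖ ^ (-b)) ≤
      ENNReal.ofReal (R ^ (-a)) *
          (ball c R).indicator (fun w => ENNReal.ofReal (‖w - c‖ ^ (-b))) w +
        ENNReal.ofReal (R ^ (-b)) *
          (ball c' R).indicator (fun w => ENNReal.ofReal (‖w - c'‖ ^ (-a))) w +
        ENNReal.ofReal (4 ^ a * 2 ^ b) * ENNReal.ofReal ((R + ‖w - c‖) ^ (-(a + b))) := by
  have hwc : 0 < ‖w - c‖ := norm_pos_iff.2 (sub_ne_zero.2 hc)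
  have hwc' : 0 < ‖w - c'‖ := norm_pos_iff.2 (sub_ne_zero.2 hc')
  have hξ_le := norm_sub_norm_le ξ η
  have hη_le := norm_le_norm_add_norm_sub ξ η
  rcases lt_or_ge ‖η‖ R with hη_lt | hη_ge
  · refine le_add_right (le_add_right ?_)
    rw [indicator_of_mem (by rw [mem_ball, dist_eq_norm]; linarith),
      ← ENNReal.ofReal_mul (by positivity)]
    gcongr ENNReal.ofReal (?_ * ?_)
    · exact Real.rpow_le_rpow_of_nonpos hR (by linarith) (by linarith)
    · exact Real.rpow_le_rpow_of_nonpos hwc hη (by linarith)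
  rcases lt_or_ge ‖ξ - η‖ R with hξη_lt | hξη_ge
  · refine le_add_right (le_add_left ?_)
    rw [indicator_of_mem (by rw [mem_ball, dist_eq_norm]; linarith),
      ← ENNReal.ofReal_mul (by positivity), mul_comm (R ^ (-b))]
    gcongr ENNReal.ofReal (?_ * ?_)
    · exact Real.rpow_le_rpow_of_nonpos hwc' hξη (by linarith)
    · exact Real.rpow_le_rpow_of_nonpos hR hη_ge (by linarith)
  · refine le_add_left ?_
    rw [← ENNReal.ofReal_mul (by positivity)]
    exact ENNReal.ofReal_le_ofReal <| rpow_neg_mul_rpow_neg_le ha hb (by norm_num) (by norm_num)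
      (by positivity) (by linarith) (by linarith)

theorem AffineSubspace.exists_isometry_euclideanSpace_range_eq {E : Type*}
    [NormedAddCommGroup E] [InnerProductSpace ℝ E] (P : AffineSubspace ℝ E)
    [FiniteDimensional ℝ P.direction] (hP : (P : Set E).Nonempty) {n : ℕ}
    (hn : finrank ℝ P.direction = n) :
    ∃ e : EuclideanSpace ℝ (Fin n) → E, Isometry e ∧ range e = P := by
  obtain ⟨p, hp⟩ := hP
  have : Nonempty P := ⟨⟨p, hp⟩⟩
  let L : EuclideanSpace ℝ (Fin n) ≃ₗᵢ[ℝ] P.direction :=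
    ((stdOrthonormalBasis ℝ P.direction).reindex (finCongr hn)).repr.symm
  let g : EuclideanSpace ℝ (Fin n) ≃ᵃⁱ[ℝ] P :=
    L.toAffineIsometryEquiv.trans (AffineIsometryEquiv.vaddConst ℝ ⟨p, hp⟩)
  exact ⟨Subtype.val ∘ g, isometry_subtype_coe.comp g.isometry,
    by rw [g.surjective.range_comp, Subtype.range_coe]⟩

theorem Isometry.exists_dist_le_dist_of_range_eq {E F : Type*} [NormedAddCommGroup E]
    [InnerProductSpace ℝ E] [PseudoMetricSpace F] {P : AffineSubspace ℝ E} [Nonempty P]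
    [P.direction.HasOrthogonalProjection] {e : F → E} (he : Isometry e) (hrange : range e = P)
    (x : E) : ∃ c, ∀ w, dist w c ≤ dist x (e w) := by
  obtain ⟨c, hc⟩ : (EuclideanGeometry.orthogonalProjection P x : E) ∈ range e :=
    hrange ▸ (EuclideanGeometry.orthogonalProjection P x).2
  refine ⟨c, fun w => ?_⟩
  have hpyth :=
    EuclideanGeometry.dist_sq_eq_dist_orthogonalProjection_sq_add_dist_orthogonalProjection_sq
      x (SetLike.mem_coe.1 (hrange ▸ mem_range_self w))
  rw [← he.dist_eq, hc, dist_comm x]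
  nlinarith [dist_nonneg (x := e w) (y := x),
    dist_nonneg (x := e w) (y := (EuclideanGeometry.orthogonalProjection P x : E))]

instance isAddHaarMeasure_hausdorffMeasure_euclideanSpace (n : ℕ) :
    (μH[n] : Measure (EuclideanSpace ℝ (Fin n))).IsAddHaarMeasure := by
  simpa only [finrank_euclideanSpace_fin] using
    isAddHaarMeasure_hausdorffMeasure (E := EuclideanSpace ℝ (Fin n))

theorem lintegral_affineSubspace_norm_sub_rpow_mul_norm_rpow_le {E : Type*}
    [NormedAddCommGroup E] [InnerProductSpace ℝ E] [FiniteDimensional ℝ E] [MeasurableSpace E]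
    [BorelSpace E] {n : ℕ} (hn : 0 < n) (P : AffineSubspace ℝ E)
    (hP : finrank ℝ P.direction = n) {a b : ℝ} (ha : 0 ≤ a) (hb : 0 ≤ b) {ξ : E} (hξ : ξ ≠ 0) :
    ∫⁻ η in (P : Set E), ENNReal.ofReal (‖ξ - η‖ ^ (-a) * ‖η‖ ^ (-b)) ∂μH[n] ≤
      (∫⁻ x in ball (0 : EuclideanSpace ℝ (Fin n)) 1, ENNReal.ofReal (‖x‖ ^ (-b)) ∂μH[n] +
          ∫⁻ x in ball (0 : EuclideanSpace ℝ (Fin n)) 1, ENNReal.ofReal (‖x‖ ^ (-a)) ∂μH[n] +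
          ENNReal.ofReal (4 ^ a * 2 ^ b) *
            ∫⁻ x : EuclideanSpace ℝ (Fin n), ENNReal.ofReal ((1 + ‖x‖) ^ (-(a + b))) ∂μH[n]) *
        ENNReal.ofReal ((‖ξ‖ / 2) ^ (n - (a + b))) := by
  rcases (P : Set E).eq_empty_or_nonempty with hempty | hne
  · simp [hempty]
  have : Nonempty P := hne.to_subtype
  have : Nontrivial (EuclideanSpace ℝ (Fin n)) :=
    Module.nontrivial_of_finrank_pos (R := ℝ) (by rwa [finrank_euclideanSpace_fin])
  obtain ⟨e, he, hrange⟩ := P.exists_isometry_euclideanSpace_range_eq hne hP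
  obtain ⟨c, hc⟩ := he.exists_dist_le_dist_of_range_eq hrange 0
  obtain ⟨c', hc'⟩ := he.exists_dist_le_dist_of_range_eq hrange ξ
  set R := ‖ξ‖ / 2
  have hR : 0 < R := by positivity
  have hpull : ∫⁻ η in (P : Set E), ENNReal.ofReal (‖ξ - η‖ ^ (-a) * ‖η‖ ^ (-b)) ∂μH[n] =
      ∫⁻ w, ENNReal.ofReal (‖ξ - e w‖ ^ (-a) * ‖e w‖ ^ (-b)) ∂μH[n] := by
    rw [← hrange, ← he.map_hausdorffMeasure (Or.inl n.cast_nonneg),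
      lintegral_map (by fun_prop) he.continuous.measurable]
  have hpow : ∀ s t, s + t = n - (a + b) →
      ENNReal.ofReal (R ^ s) * ENNReal.ofReal (R ^ t) = ENNReal.ofReal (R ^ (n - (a + b))) := by
    intro s t hst
    rw [← ENNReal.ofReal_mul (by positivity), ← Real.rpow_add hR, hst]
  rw [hpull]
  calc _ ≤ ∫⁻ w, (ENNReal.ofReal (R ^ (-a)) *
              (ball c R).indicator (fun w => ENNReal.ofReal (‖w - c‖ ^ (-b))) w +
            ENNReal.ofReal (R ^ (-b)) *
              (ball c' R).indicator (fun w => ENNReal.ofReal (‖w - c'‖ ^ (-a))) w +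
            ENNReal.ofReal (4 ^ a * 2 ^ b) * ENNReal.ofReal ((R + ‖w - c‖) ^ (-(a + b))))
            ∂μH[n] := by
        refine lintegral_mono_ae ?_
        filter_upwards [Measure.ae_ne _ c, Measure.ae_ne _ c'] with w hwc hwc'
        refine ofReal_norm_sub_rpow_mul_norm_rpow_le ha hb hR (by ring) hwc hwc' ?_ ?_
        · simpa [dist_eq_norm] using hc w
        · simpa [dist_eq_norm] using hc' w
    _ = _ := by
        rw [lintegral_add_left (by fun_prop (disch := exact measurableSet_ball)),
          lintegral_add_left (by fun_prop (disch := exact measurableSet_ball)),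
          lintegral_const_mul' _ _ ENNReal.ofReal_ne_top,
          lintegral_const_mul' _ _ ENNReal.ofReal_ne_top,
          lintegral_const_mul' _ _ ENNReal.ofReal_ne_top,
          lintegral_indicator measurableSet_ball, lintegral_indicator measurableSet_ball,
          lintegral_ball_norm_sub_rpow_neg _ c hR, lintegral_ball_norm_sub_rpow_neg _ c' hR,
          lintegral_add_norm_sub_rpow_neg _ c hR, finrank_euclideanSpace_fin, ← mul_assoc,
          hpow _ _ (by ring), ← mul_assoc, hpow _ _ (by ring)]
        ring

/-- Lemma (plane case): uniform bound on the surface integral over a 2-dimensional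
affine plane in ℝ³ of `|ξ-η|^{-a} |η|^{-b}`. -/
theorem plane_kernel_bound (a b : ℝ) (ha : 0 < a) (ha2 : a < 2)
    (hb : 0 < b) (hb2 : b < 2) (hab : 2 < a + b) :
    ∃ C : ℝ, 0 < C ∧
      ∀ (P : AffineSubspace ℝ (EuclideanSpace ℝ (Fin 3))),
        Module.finrank ℝ P.direction = 2 →
        ∀ ξ : EuclideanSpace ℝ (Fin 3), ξ ≠ 0 →
          ∫⁻ η in (P : Set (EuclideanSpace ℝ (Fin 3))),
              ENNReal.ofReal (‖ξ - η‖ ^ (-a) * ‖η‖ ^ (-b)) ∂(μH[2]) ≤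
            ENNReal.ofReal (C * ‖ξ‖ ^ (-(a + b - 2))) := by
  have : (μH[2] : Measure (EuclideanSpace ℝ (Fin 2))).IsAddHaarMeasure := by
    simpa using isAddHaarMeasure_hausdorffMeasure_euclideanSpace 2
  set J : ℝ → ℝ≥0∞ := fun t =>
    ∫⁻ x in ball (0 : EuclideanSpace ℝ (Fin 2)) 1, ENNReal.ofReal (‖x‖ ^ (-t)) ∂μH[2]
  set T := ∫⁻ x : EuclideanSpace ℝ (Fin 2), ENNReal.ofReal ((1 + ‖x‖) ^ (-(a + b))) ∂μH[2]
  set M := (J b + J a + ENNReal.ofReal (4 ^ a * 2 ^ b) * T) * ENNReal.ofReal (2 ^ (a + b - 2))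
  have hM : M ≠ ∞ := by
    have hJ : ∀ t < 2, J t ≠ ∞ := fun t ht =>
      (lintegral_ball_norm_rpow_neg_lt_top _ (by simpa using ht)).ne
    have hT : T ≠ ∞ := (finite_integral_one_add_norm (by simpa using hab)).ne
    simp [M, hJ a ha2, hJ b hb2, hT, ENNReal.mul_eq_top]
  refine ⟨M.toReal + 1, by positivity, fun P hP ξ hξ => ?_⟩
  have hplane := lintegral_affineSubspace_norm_sub_rpow_mul_norm_rpow_le two_pos P hP ha.le hb.le hξ
  simp only [Nat.cast_ofNat] at hplane
  have hscale : (‖ξ‖ / 2) ^ (2 - (a + b)) = 2 ^ (a + b - 2) * ‖ξ‖ ^ (-(a + b - 2)) := by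
    rw [Real.div_rpow (norm_nonneg _) zero_le_two, div_eq_mul_inv, ← Real.rpow_neg zero_le_two,
      mul_comm, neg_sub, neg_sub]
  calc _ ≤ _ := hplane
    _ = M * ENNReal.ofReal (‖ξ‖ ^ (-(a + b - 2))) := by
        rw [hscale, ENNReal.ofReal_mul (p := 2 ^ (a + b - 2)) (by positivity), ← mul_assoc]
    _ ≤ ENNReal.ofReal ((M.toReal + 1) * ‖ξ‖ ^ (-(a + b - 2))) := by
        rw [ENNReal.ofReal_mul (by positivity),
          ENNReal.ofReal_add ENNReal.toReal_nonneg zero_le_one, ENNReal.ofReal_toReal hM]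
        gcongr
        exact le_self_add
end

section
/- For every n ≥ 1, the number C_n of n × n special upper-echelon matrices — matrices obtained by choosing one highlighted entry in each column j (2 ≤ j ≤ n+1) from rows 1,…,j−1 such that every highlighted entry in a higher row lies strictly to the left of every highlighted entry in any lower row — satisfies C_n ≤ 4^n. -/
/-- The number of `n × n` special upper-echelon matrices (one highlighted entry
`μ(j) ∈ {1, …, j-1}` in each column `j ∈ {2, …, n+1}`, with highlighted entries in
higher rows strictly to the left of those in lower rows, i.e. `μ` monotone)
is at most `4 ^ n`. -/
theorem upper_echelon_count (n : ℕ) (hn : 1 ≤ n) :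
    Nat.card {μ : Fin n → ℕ //
        (∀ i : Fin n, 1 ≤ μ i ∧ μ i ≤ (i : ℕ) + 1) ∧
        (∀ i i' : Fin n, i ≤ i' → μ i ≤ μ i')} ≤ 4 ^ n := by
  classical
  -- map μ to the strictly monotone function i ↦ μ i + i, valued in Fin (2n)
  have hval : ∀ (μ : Fin n → ℕ), (∀ i : Fin n, 1 ≤ μ i ∧ μ i ≤ (i : ℕ) + 1) →
      ∀ i : Fin n, μ i + (i : ℕ) < 2 * n := by
    intro μ h i
    have h1 := (h i).2
    have h2 := i.isLt
    omega
  set F : {μ : Fin n → ℕ //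
        (∀ i : Fin n, 1 ≤ μ i ∧ μ i ≤ (i : ℕ) + 1) ∧
        (∀ i i' : Fin n, i ≤ i' → μ i ≤ μ i')} → Finset (Fin (2 * n)) :=
    fun μ => Finset.univ.image (fun i : Fin n =>
      (⟨μ.1 i + (i : ℕ), hval μ.1 μ.2.1 i⟩ : Fin (2 * n))) with hF
  have hmono : ∀ (μ : {μ : Fin n → ℕ //
        (∀ i : Fin n, 1 ≤ μ i ∧ μ i ≤ (i : ℕ) + 1) ∧
        (∀ i i' : Fin n, i ≤ i' → μ i ≤ μ i')}),
      StrictMono (fun i : Fin n =>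
        (⟨μ.1 i + (i : ℕ), hval μ.1 μ.2.1 i⟩ : Fin (2 * n))) := by
    intro μ i i' hii
    have h1 : μ.1 i ≤ μ.1 i' := μ.2.2 i i' hii.le
    have h2 : (i : ℕ) < (i' : ℕ) := hii
    simp only [Fin.mk_lt_mk]
    omega
  have hcard : ∀ μ, (F μ).card = n := by
    intro μ
    rw [hF]
    rw [Finset.card_image_of_injective _ (hmono μ).injective, Finset.card_univ,
      Fintype.card_fin]
  have hinj : Function.Injective F := by
    intro μ ν hμν
    have h1 := Finset.orderEmbOfFin_unique (hcard μ)
      (f := fun i : Fin n => (⟨μ.1 i + (i : ℕ), hval μ.1 μ.2.1 i⟩ : Fin (2 * n)))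
      (fun i => by simp [hF]) (hmono μ)
    have h2 := Finset.orderEmbOfFin_unique (hcard μ)
      (f := fun i : Fin n => (⟨ν.1 i + (i : ℕ), hval ν.1 ν.2.1 i⟩ : Fin (2 * n)))
      (fun i => by rw [hμν]; simp [hF]) (hmono ν)
    have h3 := h1.trans h2.symm
    ext i
    have := congrFun h3 i
    simpa [Fin.mk.injEq] using this
  calc Nat.card _ ≤ Nat.card (Finset (Fin (2 * n))) :=
        Nat.card_le_card_of_injective F hinj
    _ = 2 ^ (2 * n) := by
        simp [Nat.card_eq_fintype_card]
    _ = 4 ^ n := by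
        rw [pow_mul]; norm_num
end
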